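/- Let n | q - 1, α a primitive n-th root of unity in F_q, and A, B subsets of the group R_n of n-th roots of unity with AB = {ab : a ∈ A, b ∈ B}. Let C_A, C_B, C_{AB} denote the cyclic codes of length n over F_q with complete defining sets A, B, AB respectively, and let d_A⊥ be the minimum distance of the dual of C_A and d_B the minimum distance of C_B. If d_A⊥ ≥ d_B, then C_{AB} has (d_A⊥ - d_B + 1, d_B)-locality. -/

import Mathlib

/-! A minimum-weight word `h` of `C_A⊥` can be cyclically shifted so that its support `S`,
of size `d_A⊥`, contains any given coordinate. For `u ∈ C_{AB}` the coordinatewise product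
`h * u` lies in `C_B`: its value at `β ∈ B` is the pairing of `h` with `u` twisted by the powers
of `β`, and that twist lies in `C_A` because `aβ ∈ AB`. Hence a word of `C_{AB}` that is nonzero
on `S` yields a nonzero word of `C_B` supported in `S`, so it has at least `d_B` nonzero
coordinates in `S`. -/

noncomputable section

open Polynomial
open scoped Pointwise

/-- The cyclic code of length `n` over `K` whose complete defining set is `Z ⊆ L`,
where `L` is an extension of `K` containing the `n`-th roots of unity:
codewords are those `c` whose associated polynomial vanishes on `Z`. -/
def cyclicCodeOn (K L : Type) [Field K] [Field L] [Algebra K L]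
    (n : ℕ) (Z : Set L) : Submodule K (Fin n → K) where
  carrier := {c | ∀ β ∈ Z, ∑ i : Fin n, algebraMap K L (c i) * β ^ (i : ℕ) = 0}
  add_mem' := by
    intro a b ha hb β hβ
    simp only [Pi.add_apply, map_add, add_mul, Finset.sum_add_distrib]
    rw [ha β hβ, hb β hβ, add_zero]
  zero_mem' := by intro β hβ; simp
  smul_mem' := by
    intro r a ha β hβ
    simp only [Pi.smul_apply, smul_eq_mul, map_mul, mul_assoc, ← Finset.mul_sum]
    rw [ha β hβ, mul_zero]

/-- Cyclic code of length `n` over `F` with complete defining set `Z ⊆ F`. -/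
abbrev cyclicCode (F : Type) [Field F] (n : ℕ) (Z : Set F) : Submodule F (Fin n → F) :=
  cyclicCodeOn F F n Z

/-- The dual code of a code `C ⊆ F^n` (under the standard inner product). -/
def dualSet (F : Type) [Field F] (n : ℕ) (C : Set (Fin n → F)) : Set (Fin n → F) :=
  {v | ∀ c ∈ C, ∑ i : Fin n, v i * c i = 0}

open Classical in
/-- Hamming weight of a vector. -/
def wt {F : Type} [Zero F] {n : ℕ} (c : Fin n → F) : ℕ :=
  (Finset.univ.filter (fun i => c i ≠ 0)).card

/-- `d` is the minimum Hamming distance (= minimum nonzero weight) of the code `C`. -/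
def IsMinDist {F : Type} [Zero F] {n : ℕ} (C : Set (Fin n → F)) (d : ℕ) : Prop :=
  (∃ c ∈ C, c ≠ 0 ∧ wt c = d) ∧ ∀ c ∈ C, c ≠ 0 → d ≤ wt c

open Classical in
/-- `C` has `(r, δ)`-locality: every coordinate lies in a recovery set `S` of size
at most `r + δ - 1` such that the punctured code `C|_S` has minimum distance `≥ δ`. -/
def HasLocality {F : Type} [Zero F] {n : ℕ} (C : Set (Fin n → F)) (r δ : ℕ) : Prop :=
  ∀ i : Fin n, ∃ S : Finset (Fin n), i ∈ S ∧ S.card ≤ r + δ - 1 ∧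
    ∀ c ∈ C, ∀ c' ∈ C, (∃ j ∈ S, c j ≠ c' j) →
      δ ≤ (S.filter (fun j => c j ≠ c' j)).card

/-- The polynomial `c₀ + c₁ x + ⋯ + c_{n-1} x^{n-1}` associated to a vector. -/
def vecPoly {F : Type} [Semiring F] {n : ℕ} (c : Fin n → F) : Polynomial F :=
  ∑ i : Fin n, Polynomial.C (c i) * Polynomial.X ^ (i : ℕ)

/-- The cyclic code of length `n` generated by `g(x)` (a divisor of `x^n - 1`). -/
def codeOfGen (F : Type) [Field F] (n : ℕ) (g : Polynomial F) : Set (Fin n → F) :=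
  {c | g ∣ vecPoly c}

/-- Ceiling division `⌈a / b⌉` on naturals. -/
def ceilDiv' (a b : ℕ) : ℕ := (a + b - 1) / b

/-- The code parameters meet the Singleton-like bound for `(r, δ)`-LRCs:
`d = n - k - (⌈k/r⌉ - 1)(δ - 1) + 1`. -/
def SingletonOpt (n k r δ d : ℕ) : Prop :=
  d = n - k - (ceilDiv' k r - 1) * (δ - 1) + 1

variable {F : Type} [Field F] {n : ℕ}

lemma mem_cyclicCode_iff {Z : Set F} {c : Fin n → F} :
    c ∈ cyclicCode F n Z ↔ ∀ β ∈ Z, ∑ i : Fin n, c i * β ^ (i : ℕ) = 0 := by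
  simp [cyclicCode, cyclicCodeOn]

lemma pow_val_add_of_pow_eq_one [NeZero n] {β : F} (hβ : β ^ n = 1) (j t : Fin n) :
    β ^ ((j + t : Fin n) : ℕ) = β ^ (j : ℕ) * β ^ (t : ℕ) := by
  rw [Fin.val_add, ← pow_eq_pow_mod _ hβ, pow_add]

lemma shift_mem_cyclicCode [NeZero n] {Z : Set F} (hZ : Z ⊆ {x : F | x ^ n = 1})
    {c : Fin n → F} (hc : c ∈ cyclicCode F n Z) (t : Fin n) :
    (fun j => c (j + t)) ∈ cyclicCode F n Z := by
  rw [mem_cyclicCode_iff] at hc ⊢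
  intro β hβ
  have hβn : β ^ n = 1 := hZ hβ
  have hβt : β ^ (t : ℕ) ≠ 0 := pow_ne_zero _ (IsUnit.of_pow_eq_one hβn (NeZero.ne n)).ne_zero
  refine (mul_eq_zero_iff_right hβt).mp ?_
  calc (∑ j : Fin n, c (j + t) * β ^ (j : ℕ)) * β ^ (t : ℕ)
      = ∑ j : Fin n, c (j + t) * β ^ ((j + t : Fin n) : ℕ) := by
        simp only [Finset.sum_mul, pow_val_add_of_pow_eq_one hβn, mul_assoc]
    _ = ∑ k : Fin n, c k * β ^ (k : ℕ) :=
        Fintype.sum_equiv (Equiv.addRight t) _ _ fun _ => rfl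
    _ = 0 := hc β hβ

lemma shift_mem_dualSet [NeZero n] {C : Set (Fin n → F)}
    (hC : ∀ c ∈ C, ∀ t : Fin n, (fun j => c (j + t)) ∈ C)
    {v : Fin n → F} (hv : v ∈ dualSet F n C) (t : Fin n) :
    (fun j => v (j + t)) ∈ dualSet F n C := by
  intro c hc
  rw [← hv _ (hC c hc (-t))]
  exact Fintype.sum_equiv (Equiv.addRight t) _ _ fun j => by simp

lemma wt_comp_equiv {R : Type} [Zero R] (v : Fin n → R) (e : Fin n ≃ Fin n) :
    wt (v ∘ e) = wt v := by
  classical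
  unfold wt
  exact Finset.card_equiv e (by simp)

lemma mul_mem_cyclicCode_of_mem_dualSet {A B : Set F} {h u : Fin n → F}
    (hh : h ∈ dualSet F n (cyclicCode F n A : Set (Fin n → F)))
    (hu : u ∈ cyclicCode F n (A * B)) :
    (fun j => h j * u j) ∈ cyclicCode F n B := by
  rw [mem_cyclicCode_iff] at hu ⊢
  intro β hβ
  have hu_twist : (fun j => u j * β ^ (j : ℕ)) ∈ cyclicCode F n A := by
    rw [mem_cyclicCode_iff]
    intro a ha
    rw [← hu (a * β) (Set.mul_mem_mul ha hβ)]
    exact Finset.sum_congr rfl fun k _ => by rw [mul_pow]; ring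
  rw [← hh _ hu_twist]
  exact Finset.sum_congr rfl fun k _ => by ring

open Classical in
lemma le_card_filter_ne_of_mem_dualSet {A B : Set F} {dB : ℕ}
    (hdB : ∀ w ∈ (cyclicCode F n B : Set (Fin n → F)), w ≠ 0 → dB ≤ wt w)
    {h c c' : Fin n → F} (hh : h ∈ dualSet F n (cyclicCode F n A : Set (Fin n → F)))
    (hc : c ∈ cyclicCode F n (A * B)) (hc' : c' ∈ cyclicCode F n (A * B))
    {j : Fin n} (hhj : h j ≠ 0) (hj : c j ≠ c' j) :
    dB ≤ ((Finset.univ.filter fun k => h k ≠ 0).filter fun k => c k ≠ c' k).card := by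
  set w : Fin n → F := fun k => h k * (c k - c' k)
  have hw : w ∈ cyclicCode F n B :=
    mul_mem_cyclicCode_of_mem_dualSet hh (Submodule.sub_mem _ hc hc')
  have hw_ne : w ≠ 0 := Function.ne_iff.mpr ⟨j, mul_ne_zero hhj (sub_ne_zero.mpr hj)⟩
  have hwt : wt w = ((Finset.univ.filter fun k => h k ≠ 0).filter fun k => c k ≠ c' k).card := by
    simp only [wt, w, Finset.filter_filter, ne_eq, mul_eq_zero, sub_eq_zero, not_or]
  exact hwt ▸ hdB w hw hw_ne

theorem stmt6_general (F : Type) [Field F] (n : ℕ)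
    (A B : Set F) (hA : A ⊆ {x : F | x ^ n = 1})
    (dA dB : ℕ)
    (hdA : IsMinDist (dualSet F n (cyclicCode F n A : Set (Fin n → F))) dA)
    (hdB : IsMinDist (cyclicCode F n B : Set (Fin n → F)) dB) :
    HasLocality (cyclicCode F n (A * B) : Set (Fin n → F)) (dA - dB + 1) dB := by
  classical
  intro i
  have : NeZero n := ⟨i.pos.ne'⟩
  obtain ⟨⟨h₀, hh₀, hh₀_ne, rfl⟩, -⟩ := hdA
  obtain ⟨j₀, hj₀⟩ := Function.ne_iff.mp hh₀_ne
  set h : Fin n → F := fun j => h₀ (j + (j₀ - i))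
  have hh : h ∈ dualSet F n (cyclicCode F n A : Set (Fin n → F)) :=
    shift_mem_dualSet (fun c hc t => shift_mem_cyclicCode hA hc t) hh₀ _
  refine ⟨Finset.univ.filter fun j => h j ≠ 0, by simpa [h] using hj₀, ?_, ?_⟩
  · have hcard : (Finset.univ.filter fun j => h j ≠ 0).card = wt h₀ :=
      wt_comp_equiv h₀ (Equiv.addRight (j₀ - i))
    omega
  · rintro c hc c' hc' ⟨j, hjS, hj⟩
    exact le_card_filter_ne_of_mem_dualSet hdB.2 hh hc hc'
      (Finset.mem_filter.mp hjS).2 hj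

/-- if `d_A⊥ ≥ d_B` then the cyclic code with complete defining set `AB`
has `(d_A⊥ - d_B + 1, d_B)`-locality (case `n ∣ q - 1`). -/
theorem stmt6 (F : Type) [Field F] [Fintype F] (n : ℕ) (hn : 0 < n)
    (hdvd : n ∣ Fintype.card F - 1)
    (α : F) (hα : IsPrimitiveRoot α n)
    (A B : Set F) (hA : A ⊆ {x : F | x ^ n = 1}) (hB : B ⊆ {x : F | x ^ n = 1})
    (dA dB : ℕ)
    (hdA : IsMinDist (dualSet F n (cyclicCode F n A : Set (Fin n → F))) dA)
    (hdB : IsMinDist (cyclicCode F n B : Set (Fin n → F)) dB)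
    (hge : dB ≤ dA) :
    HasLocality (cyclicCode F n (A * B) : Set (Fin n → F)) (dA - dB + 1) dB :=
  stmt6_general F n A B hA dA dB hdA hdB
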